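/- Connection with the Wigner–Yanase metric (Proposition 5.2, finite-dimensional form): let ρ be a positive definite density matrix of size n and R a Hermitian n×n complex matrix. Then there is a unique matrix Y satisfying √ρ * Y + Y * √ρ = Complex.I • (R * ρ − ρ * R), namely Y = Complex.I • (R * √ρ − √ρ * R); this Y is Hermitian, and Tr(Y * Y) = 2 * Tr(ρ * R * R) − 2 * Tr(√ρ * R * √ρ * R). -/

import Mathlib

open Matrix
open scoped ComplexOrder

noncomputable section

/-- A density matrix: positive semidefinite with trace 1. -/
def IsDensity {ι : Type*} [Fintype ι] (ρ : Matrix ι ι ℂ) : Prop :=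
  ρ.PosSemidef ∧ ρ.trace = 1

/-- A coupling between the quantum states `ρ` and `σ`. -/
def IsCoupling {ι : Type*} [Fintype ι] (ρ σ : Matrix ι ι ℂ)
    (P : Matrix (ι × ι) (ι × ι) ℂ) : Prop :=
  P.PosSemidef ∧ P.trace = 1 ∧
  (∀ j l, ∑ i, P (i, j) (i, l) = ρ l j) ∧
  (∀ i k, ∑ j, P (i, j) (k, j) = σ i k)

/-- The cost operator `C = ∑ s, (Rₛ ⊗ I − I ⊗ Rₛᵀ)²` associated to a family of
Hermitian matrices. -/
def costOp {ι : Type*} [Fintype ι] [DecidableEq ι] {κ : Type*} [Fintype κ]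
    (R : κ → Matrix ι ι ℂ) : Matrix (ι × ι) (ι × ι) ℂ :=
  ∑ s, (Matrix.of (fun p q : ι × ι =>
      R s p.1 q.1 * (if p.2 = q.2 then 1 else 0)
      - (if p.1 = q.1 then 1 else 0) * R s q.2 p.2)) ^ 2

/-- The positive semidefinite square root of a positive semidefinite matrix
(the definition `Matrix.PosSemidef.sqrt` of the older Mathlib, removed since). -/
noncomputable def Matrix.PosSemidef.sqrt {n : Type*} [Fintype n] [DecidableEq n]
    {𝕜 : Type*} [RCLike 𝕜] {A : Matrix n n 𝕜} (hA : A.PosSemidef) : Matrix n n 𝕜 :=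
  hA.1.eigenvectorUnitary.1 * diagonal ((↑) ∘ (√·) ∘ hA.1.eigenvalues) *
  (star hA.1.eigenvectorUnitary : Matrix n n 𝕜)

/-! With `S = √ρ`, the matrix `Y = i[R, S]` solves `SY + YS = i[R, S²]` by a ring identity and is
Hermitian because `R` and `S` are. Uniqueness holds because `X ↦ SX + XS` is injective for
positive definite `S`: if `SW + WS = 0` then `Tr(Wᴴ S W) + Tr(W S Wᴴ) = Tr(Wᴴ (SW + WS)) = 0` is
a sum of two nonnegative traces, so `Wᴴ S W = 0` and hence `W = 0`. The trace formula is the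
expansion of `-[R, S]²` followed by cyclicity of the trace. -/

namespace Matrix

variable {n 𝕜 : Type*} [Fintype n] [RCLike 𝕜]

lemma PosSemidef.posSemidef_sqrt [DecidableEq n] {A : Matrix n n 𝕜} (hA : A.PosSemidef) :
    hA.sqrt.PosSemidef := by
  refine (posSemidef_diagonal_iff.mpr fun i => ?_).mul_mul_conjTranspose_same
    hA.1.eigenvectorUnitary.1
  simp only [Function.comp_apply, RCLike.ofReal_nonneg, Real.sqrt_nonneg]

lemma PosSemidef.sqrt_mul_self [DecidableEq n] {A : Matrix n n 𝕜} (hA : A.PosSemidef) :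
    hA.sqrt * hA.sqrt = A := by
  set U : Matrix n n 𝕜 := hA.1.eigenvectorUnitary.1
  set D : Matrix n n 𝕜 := diagonal ((↑) ∘ (√·) ∘ hA.1.eigenvalues)
  have hUU : star U * U = 1 := mem_unitaryGroup_iff'.mp hA.1.eigenvectorUnitary.2
  have hDD : D * D = diagonal (RCLike.ofReal ∘ hA.1.eigenvalues) := by
    rw [diagonal_mul_diagonal]
    congr 1 with i
    simp only [Function.comp_apply]
    rw [← RCLike.ofReal_mul, Real.mul_self_sqrt (hA.eigenvalues_nonneg i)]
  conv_rhs => rw [hA.1.spectral_theorem, Unitary.conjStarAlgAut_apply]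
  calc U * D * star U * (U * D * star U) = U * (D * (star U * U) * D) * star U := by
        simp only [Matrix.mul_assoc]
    _ = _ := by rw [hUU, Matrix.mul_one, hDD]

lemma PosSemidef.posDef_sqrt [DecidableEq n] {A : Matrix n n 𝕜} (hA : A.PosSemidef)
    (hAu : IsUnit A) : hA.sqrt.PosDef :=
  hA.posSemidef_sqrt.posDef_iff_isUnit.mpr (isUnit_mul_self_iff.mp (hA.sqrt_mul_self.symm ▸ hAu))

lemma PosDef.conjTranspose_mul_mul_same_eq_zero_iff {m : Type*} [Fintype m] {A : Matrix n n 𝕜}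
    (hA : A.PosDef) {B : Matrix n m 𝕜} : Bᴴ * A * B = 0 ↔ B = 0 := by
  refine ⟨fun h => ?_, fun h => by simp [h]⟩
  classical
  refine ext_of_mulVec_single fun j => ?_
  set e : m → 𝕜 := Pi.single j 1
  have hx : star (B *ᵥ e) ⬝ᵥ (A *ᵥ (B *ᵥ e)) = star e ⬝ᵥ ((Bᴴ * A * B) *ᵥ e) := by
    rw [star_mulVec, ← dotProduct_mulVec, mulVec_mulVec, mulVec_mulVec, Matrix.mul_assoc]
  rw [zero_mulVec]
  by_contra hBe
  have := hA.dotProduct_mulVec_pos hBe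
  rw [hx, h, zero_mulVec, dotProduct_zero] at this
  exact this.false

lemma PosDef.mul_add_mul_injective {A : Matrix n n 𝕜} (hA : A.PosDef) :
    Function.Injective fun X : Matrix n n 𝕜 => A * X + X * A := by
  intro Z Y (hZY : A * Z + Z * A = A * Y + Y * A)
  set W := Z - Y
  have hW : A * W + W * A = 0 := by
    simp only [W, Matrix.mul_sub, Matrix.sub_mul]
    rw [sub_add_sub_comm, hZY, sub_self]
  have hsum : (Wᴴ * A * W).trace + (W * A * Wᴴ).trace = 0 := by
    rw [Matrix.mul_assoc, trace_mul_comm (W * A), ← trace_add, ← Matrix.mul_add, hW,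
      Matrix.mul_zero, trace_zero]
  have htr := (add_eq_zero_iff_of_nonneg (hA.posSemidef.conjTranspose_mul_mul_same W).trace_nonneg
    (hA.posSemidef.mul_mul_conjTranspose_same W).trace_nonneg).mp hsum |>.1
  rw [(hA.posSemidef.conjTranspose_mul_mul_same W).trace_eq_zero_iff,
    hA.conjTranspose_mul_mul_same_eq_zero_iff] at htr
  exact sub_eq_zero.mp htr

section Commutator

open Complex

lemma IsHermitian.I_smul_commutator {R S : Matrix n n ℂ} (hR : R.IsHermitian)
    (hS : S.IsHermitian) : (I • (R * S - S * R)).IsHermitian := by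
  rw [IsHermitian, conjTranspose_smul, conjTranspose_sub, conjTranspose_mul, conjTranspose_mul,
    hR.eq, hS.eq, star_def, conj_I, neg_smul, ← smul_neg, neg_sub]

lemma mul_add_mul_I_smul_commutator (R S : Matrix n n ℂ) :
    S * (I • (R * S - S * R)) + (I • (R * S - S * R)) * S = I • (R * (S * S) - S * S * R) := by
  rw [Matrix.mul_smul, Matrix.smul_mul, ← smul_add]
  congr 1
  noncomm_ring

lemma trace_I_smul_commutator_mul_self (R S : Matrix n n ℂ) :
    trace (I • (R * S - S * R) * I • (R * S - S * R))
      = 2 * trace (S * S * R * R) - 2 * trace (S * R * S * R) := by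
  have h₁ : trace (R * S * R * S) = trace (S * R * S * R) := by
    simpa only [Matrix.mul_assoc] using trace_mul_comm (R * S * R) S
  have h₂ : trace (R * S * S * R) = trace (S * S * R * R) := by
    simpa only [Matrix.mul_assoc] using trace_mul_comm R (S * S * R)
  have h₃ : trace (S * R * R * S) = trace (S * S * R * R) := by
    simpa only [Matrix.mul_assoc] using trace_mul_comm (S * R * R) S
  simp only [smul_mul_smul_comm, I_mul_I, Matrix.sub_mul, Matrix.mul_sub, trace_smul, trace_sub,
    ← Matrix.mul_assoc, h₁, h₂, h₃]
  ring

end Commutator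

end Matrix

/-- **Connection with the Wigner–Yanase metric** (Proposition 5.2, finite-dimensional form):
the unique solution `Y` of `√ρ Y + Y √ρ = i (Rρ − ρR)` is `Y = i (R√ρ − √ρ R)`; it is
Hermitian and `Tr(Y²) = 2 Tr(ρ R R) − 2 Tr(√ρ R √ρ R)`. -/
theorem wigner_yanase_connection {n : ℕ}
    (ρ : Matrix (Fin n) (Fin n) ℂ) (hρ : IsDensity ρ) (hρ_pd : IsUnit ρ)
    (R : Matrix (Fin n) (Fin n) ℂ) (hR : R.IsHermitian) :
    ∀ Y : Matrix (Fin n) (Fin n) ℂ,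
      Y = Complex.I • (R * hρ.1.sqrt - hρ.1.sqrt * R) →
        (hρ.1.sqrt * Y + Y * hρ.1.sqrt = Complex.I • (R * ρ - ρ * R)) ∧
        (∀ Z : Matrix (Fin n) (Fin n) ℂ,
          hρ.1.sqrt * Z + Z * hρ.1.sqrt = Complex.I • (R * ρ - ρ * R) → Z = Y) ∧
        Y.IsHermitian ∧
        Matrix.trace (Y * Y)
          = 2 * Matrix.trace (ρ * R * R) - 2 * Matrix.trace (hρ.1.sqrt * R * hρ.1.sqrt * R) := by
  intro Y hY
  set S := hρ.1.sqrt
  have hSS : S * S = ρ := hρ.1.sqrt_mul_self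
  have hSY : S * Y + Y * S = Complex.I • (R * ρ - ρ * R) := by
    rw [hY, mul_add_mul_I_smul_commutator, hSS]
  refine ⟨hSY, fun Z hZ => (hρ.1.posDef_sqrt hρ_pd).mul_add_mul_injective (hZ.trans hSY.symm),
    hY ▸ hR.I_smul_commutator hρ.1.posSemidef_sqrt.1, ?_⟩
  rw [hY, trace_I_smul_commutator_mul_self, hSS]
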